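/- Let p ≤ ν < q and w ∈ S_∞. Define the sequence r₀ = p, and for j ≥ 1 let r_j be the index with r_j > r_{j−1}, w(r_j) > w(r_{j−1}), and w(r_j) minimal among such indices (such r_j always exists since w fixes all large integers). Let k be minimal with r_k > ν. Then ℓ(w·t_{r_{k−1}, r_k}) = ℓ(w) + 1 and there is no r > r_k with w(r_{k−1}) < w(r) < w(r_k). -/

import Mathlib

/-- `S_∞`: a permutation of `ℕ` has finite support. -/
def FinSupp (w : Equiv.Perm ℕ) : Prop := ∃ N, ∀ i, N ≤ i → w i = i

/-- The inversion number `ℓ(w) = #{i < j : w(i) > w(j)}`. -/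
noncomputable def ell (w : Equiv.Perm ℕ) : ℕ :=
  Set.ncard {p : ℕ × ℕ | p.1 < p.2 ∧ w p.2 < w p.1}

/-!
If `a < b`, `w a < w b` and no `m > a` has `w a < w m < w b`, then the inversions of
`w * swap a b` other than `(a, b)` correspond to the inversions of `w` under the involution that
replaces `(i, j)` by `(i, swap a b j)` when `w i` lies strictly between `w a` and `w b`, and fixes
it otherwise. Such an `i` must lie to the left of `a`, so the column swap keeps `i` the smaller
index; for all other pairs the swap does not change whether they are inverted. The pair
`(r (k-1), r k)` of the chain satisfies these hypotheses by the minimality of `w (r k)`.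
-/

open Equiv

def inversions (w : Perm ℕ) : Set (ℕ × ℕ) := {q | q.1 < q.2 ∧ w q.2 < w q.1}

namespace FinSupp

variable {w : Perm ℕ}

theorem apply_lt_of_lt {N : ℕ} (hN : ∀ i, N ≤ i → w i = i) {i : ℕ} (hi : i < N) : w i < N := by
  by_contra! h
  have : w i = i := w.injective (hN _ h)
  omega

theorem inversions_finite (hs : FinSupp w) : (inversions w).Finite := by
  obtain ⟨N, hN⟩ := hs
  refine ((Set.finite_Iio N).prod (Set.finite_Iio N)).subset ?_
  rintro ⟨i, j⟩ ⟨hij : i < j, hinv : w j < w i⟩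
  have hj : j < N := by
    by_contra! hj
    rcases lt_or_ge i N with hi | hi
    · have := apply_lt_of_lt hN hi
      have := hN j hj
      omega
    · have := hN i hi
      have := hN j hj
      omega
  exact ⟨hij.trans hj, hj⟩

theorem mul_swap (hs : FinSupp w) (a b : ℕ) : FinSupp (w * swap a b) := by
  obtain ⟨N, hN⟩ := hs
  refine ⟨max N (max a b + 1), fun i hi => ?_⟩
  rw [Perm.mul_apply, swap_apply_of_ne_of_ne (by omega) (by omega)]
  exact hN i (le_of_max_le_left hi)

end FinSupp

section MonkPair

variable {w : Perm ℕ} {a b : ℕ}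

def swapInWindow (w : Perm ℕ) (a b : ℕ) (q : ℕ × ℕ) : ℕ × ℕ :=
  (q.1, if w a < w q.1 ∧ w q.1 < w b then swap a b q.2 else q.2)

theorem swapInWindow_involutive : Function.Involutive (swapInWindow w a b) := by
  rintro ⟨i, j⟩
  by_cases h : w a < w i ∧ w i < w b <;> simp [swapInWindow, h]

theorem lt_of_mem_window (hmin : ∀ m, a < m → w a < w m → w b ≤ w m) {i : ℕ}
    (hai : w a < w i) (hib : w i < w b) : i < a := by
  by_contra! h
  rcases h.eq_or_lt with rfl | h
  · exact hai.false
  · exact (hmin i h hai).not_gt hib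

theorem lt_swap_apply_iff {i : ℕ} (ha : i < a) (hb : i < b) (j : ℕ) :
    i < swap a b j ↔ i < j := by
  rw [swap_apply_def]
  split_ifs <;> omega

theorem mem_inversions_mul_swap_iff (hab : a < b) (hw : w a < w b)
    (hmin : ∀ m, a < m → w a < w m → w b ≤ w m) (q : ℕ × ℕ) :
    q ∈ inversions (w * swap a b) \ {(a, b)} ↔ swapInWindow w a b q ∈ inversions w := by
  obtain ⟨i, j⟩ := q
  simp only [inversions, swapInWindow, Set.mem_sdiff, Set.mem_ofPred_eq, Set.mem_singleton_iff,
    Perm.mul_apply]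
  split_ifs with hwindow
  · have hia := lt_of_mem_window hmin hwindow.1 hwindow.2
    have hne : (i, j) ≠ (a, b) := fun h => hia.ne (Prod.ext_iff.1 h).1
    rw [swap_apply_of_ne_of_ne hia.ne (hia.trans hab).ne, lt_swap_apply_iff hia (hia.trans hab)]
    tauto
  · -- a pair through `a` or `b` keeps its status because `hmin` forbids `w a < w j < w b` for
    -- `j > a`, and a pair `(i, a)` or `(i, b)` because `w i` is outside the window
    have winj : ∀ x y, w x = w y → x = y := fun _ _ h => w.injective h
    grind (splits := 30)

theorem ell_mul_swap (hs : FinSupp w) (hab : a < b) (hw : w a < w b)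
    (hmin : ∀ m, a < m → w a < w m → w b ≤ w m) : ell (w * swap a b) = ell w + 1 := by
  have hmem : (a, b) ∈ inversions (w * swap a b) := by simp [inversions, hab, hw]
  have hpre : inversions (w * swap a b) \ {(a, b)} = swapInWindow w a b ⁻¹' inversions w :=
    Set.ext (mem_inversions_mul_swap_iff hab hw hmin)
  have hcard : (inversions (w * swap a b) \ {(a, b)}).ncard = (inversions w).ncard := by
    rw [hpre, Set.ncard_preimage_of_injective_subset_range swapInWindow_involutive.injective
      (by simp [swapInWindow_involutive.surjective.range_eq])]
  change (inversions _).ncard = (inversions _).ncard + 1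
  rw [← Set.ncard_sdiff_singleton_add_one hmem (hs.mul_swap a b).inversions_finite, hcard]

end MonkPair

theorem stmt8_general (w : Equiv.Perm ℕ) (hs : FinSupp w) (ν p : ℕ) (hp : p ≤ ν)
    (r : ℕ → ℕ) (k : ℕ) (hr0 : r 0 = p)
    (hstep : ∀ j, j < k → r j < r (j + 1) ∧ w (r j) < w (r (j + 1)) ∧
      ∀ m, r j < m → w (r j) < w m → w (r (j + 1)) ≤ w m)
    (hk : ν < r k) :
    ell (w * Equiv.swap (r (k - 1)) (r k)) = ell w + 1 ∧
    ¬ ∃ m, r k < m ∧ w (r (k - 1)) < w m ∧ w m < w (r k) := by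
  obtain ⟨k, rfl⟩ : ∃ k', k = k' + 1 := Nat.exists_eq_succ_of_ne_zero (by rintro rfl; omega)
  obtain ⟨hlt, hw, hmin⟩ := hstep k k.lt_succ_self
  rw [Nat.add_sub_cancel]
  exact ⟨ell_mul_swap hs hlt hw hmin,
    fun ⟨m, hm, hlow, hhigh⟩ => (hmin m (hlt.trans hm) hlow).not_gt hhigh⟩

/-- Given `p ≤ ν` and the sequence `r₀ = p`,
`r_{j+1} = ` the index `> r_j` with `w(r_{j+1}) > w(r_j)` and `w(r_{j+1})`
minimal among such, stopped at the first `k` with `r_k > ν`: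
then `ℓ(w·t_{r_{k−1},r_k}) = ℓ(w) + 1` and there is no `r > r_k` with
`w(r_{k−1}) < w(r) < w(r_k)` (i.e. `m_{r_{k−1},r_k}(w) = 0`). -/
theorem stmt8 (w : Equiv.Perm ℕ) (hs : FinSupp w) (ν p : ℕ) (hp : p ≤ ν)
    (r : ℕ → ℕ) (k : ℕ) (hr0 : r 0 = p)
    (hstep : ∀ j, j < k → r j < r (j + 1) ∧ w (r j) < w (r (j + 1)) ∧
      ∀ m, r j < m → w (r j) < w m → w (r (j + 1)) ≤ w m)
    (hbefore : ∀ j, j < k → r j ≤ ν) (hk : ν < r k) :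
    ell (w * Equiv.swap (r (k - 1)) (r k)) = ell w + 1 ∧
    ¬ ∃ m, r k < m ∧ w (r (k - 1)) < w m ∧ w m < w (r k) :=
  stmt8_general w hs ν p hp r k hr0 hstep hk
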